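/- Let δ ∈ (0, 1/2). Then the quantity I := sup over t₁ ≥ 0 and t ∈ [0,t₁] of ∫₀ᵗ (1+t)^{1+δ}/(1+|t−s|)^{1+δ} · [ (1+s)^{−1−δ} ∫ₛ^{t₁} (1+τ)^{−2−2δ} dτ + (1+s)^{−2−2δ} ] ds is finite. -/

import Mathlib

/-!
The weight is controlled by `1 + t ≤ (1 + s) * (1 + |t - s|)`, so it is at most `(1 + s) ^ (1 + δ)`.
The inner integral is at most its value on `[s, ∞)`, namely `(1 + s) ^ (-1 - 2δ) / (1 + 2δ)`, so the
bracket is at most `2 (1 + s) ^ (-2 - 2δ)`. Hence the integrand is dominated by `2 (1 + s) ^ (-1 - δ)`,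
whose integral over `[0, ∞)` is `2 / δ`.
-/

open Real Set MeasureTheory intervalIntegral

lemma integral_rpow_le_of_lt_neg_one {q a b : ℝ} (hq : q < -1) (ha : 0 < a) (hab : a ≤ b) :
    ∫ x in a..b, x ^ q ≤ a ^ (q + 1) / (-q - 1) := by
  rw [integral_rpow (Or.inr ⟨hq.ne, notMem_uIcc_of_lt ha (ha.trans_le hab)⟩)]
  have hb : 0 ≤ b ^ (q + 1) := rpow_nonneg (ha.trans_le hab).le _
  rw [show (b ^ (q + 1) - a ^ (q + 1)) / (q + 1) = (a ^ (q + 1) - b ^ (q + 1)) / (-q - 1) by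
    rw [← neg_div_neg_eq]; ring_nf]
  gcongr <;> linarith

lemma integral_one_add_rpow_le {q a b : ℝ} (hq : q < -1) (ha : -1 < a) (hab : a ≤ b) :
    ∫ x in a..b, (1 + x) ^ q ≤ (1 + a) ^ (q + 1) / (-q - 1) := by
  rw [integral_comp_add_left (fun x => x ^ q) 1]
  exact integral_rpow_le_of_lt_neg_one hq (by linarith) (by linarith)

lemma intervalIntegrable_one_add_rpow {q a b : ℝ} (ha : -1 < a) (hab : a ≤ b) :
    IntervalIntegrable (fun x => (1 + x) ^ q) volume a b := by
  refine ContinuousOn.intervalIntegrable fun x hx => ?_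
  rw [uIcc_of_le hab] at hx
  have hx0 : 1 + x ≠ 0 := by linarith [hx.1]
  exact ((continuousAt_const.add continuousAt_id).rpow_const (Or.inl hx0)).continuousWithinAt

lemma intervalIntegral.integral_mono_of_nonneg {f g : ℝ → ℝ} {a b : ℝ} (hab : a ≤ b)
    (hg : IntervalIntegrable g volume a b) (hf : ∀ x ∈ Icc a b, 0 ≤ f x)
    (hfg : ∀ x ∈ Icc a b, f x ≤ g x) :
    ∫ x in a..b, f x ≤ ∫ x in a..b, g x := by
  rw [integral_of_le hab, integral_of_le hab]
  refine MeasureTheory.integral_mono_of_nonneg ?_ hg.1 ?_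
  · exact ae_restrict_of_forall_mem measurableSet_Ioc fun x hx => hf x (Ioc_subset_Icc_self hx)
  · exact ae_restrict_of_forall_mem measurableSet_Ioc fun x hx => hfg x (Ioc_subset_Icc_self hx)

lemma one_add_le_mul_one_add_abs_sub {s : ℝ} (t : ℝ) (hs : 0 ≤ s) :
    1 + t ≤ (1 + s) * (1 + |t - s|) := by
  nlinarith [le_abs_self (t - s), abs_nonneg (t - s)]

lemma one_add_rpow_div_le {p s t : ℝ} (hp : 0 ≤ p) (hs : 0 ≤ s) (ht : 0 ≤ t) :
    (1 + t) ^ p / (1 + |t - s|) ^ p ≤ (1 + s) ^ p := by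
  rw [div_le_iff₀ (by positivity), ← mul_rpow (by linarith) (by positivity)]
  exact rpow_le_rpow (by linarith) (one_add_le_mul_one_add_abs_sub t hs) hp

lemma bracket_le {δ s t₁ : ℝ} (hδ : 0 ≤ δ) (hs : 0 ≤ s) (hst₁ : s ≤ t₁) :
    (1 + s) ^ (-1 - δ) * (∫ τ in s..t₁, (1 + τ) ^ (-2 - 2*δ)) + (1 + s) ^ (-2 - 2*δ)
      ≤ 2 * (1 + s) ^ (-2 - 2*δ) := by
  have h1s : 1 ≤ 1 + s := by linarith
  have hinner : ∫ τ in s..t₁, (1 + τ) ^ (-2 - 2*δ) ≤ (1 + s) ^ (-1 - δ) :=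
    calc ∫ τ in s..t₁, (1 + τ) ^ (-2 - 2*δ)
        ≤ (1 + s) ^ (-2 - 2*δ + 1) / (-(-2 - 2*δ) - 1) :=
          integral_one_add_rpow_le (by linarith) (by linarith) hst₁
      _ ≤ (1 + s) ^ (-2 - 2*δ + 1) :=
          div_le_self (by positivity) (by linarith)
      _ ≤ (1 + s) ^ (-1 - δ) := rpow_le_rpow_of_exponent_le h1s (by linarith)
  have hsq : (1 + s) ^ (-1 - δ) * (1 + s) ^ (-1 - δ) = (1 + s) ^ (-2 - 2*δ) := by
    rw [← rpow_add (by linarith)]; ring_nf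
  have := mul_le_mul_of_nonneg_left hinner (by positivity : 0 ≤ (1 + s) ^ (-1 - δ))
  linarith

lemma bracket_nonneg {δ s t₁ : ℝ} (hs : 0 ≤ s) (hst₁ : s ≤ t₁) :
    0 ≤ (1 + s) ^ (-1 - δ) * (∫ τ in s..t₁, (1 + τ) ^ (-2 - 2*δ)) + (1 + s) ^ (-2 - 2*δ) := by
  have : 0 ≤ ∫ τ in s..t₁, (1 + τ) ^ (-2 - 2*δ) :=
    integral_nonneg hst₁ fun τ hτ => rpow_nonneg (by linarith [hτ.1]) _
  positivity

lemma weight_mul_bracket_le {δ s t t₁ : ℝ} (hδ : 0 ≤ δ) (hs : 0 ≤ s) (hst : s ≤ t)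
    (htt₁ : t ≤ t₁) :
    (1 + t) ^ (1 + δ) / (1 + |t - s|) ^ (1 + δ) *
        ((1 + s) ^ (-1 - δ) * (∫ τ in s..t₁, (1 + τ) ^ (-2 - 2*δ)) + (1 + s) ^ (-2 - 2*δ))
      ≤ 2 * (1 + s) ^ (-1 - δ) :=
  calc _ ≤ (1 + s) ^ (1 + δ) * (2 * (1 + s) ^ (-2 - 2*δ)) :=
        mul_le_mul (one_add_rpow_div_le (by linarith) hs (hs.trans hst))
          (bracket_le hδ hs (hst.trans htt₁)) (bracket_nonneg hs (hst.trans htt₁))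
          (rpow_nonneg (by linarith) _)
    _ = 2 * (1 + s) ^ (-1 - δ) := by
        rw [mul_left_comm, ← rpow_add (by linarith)]; ring_nf

theorem stmt_2_general (δ : ℝ) (hδ : 0 < δ) :
    ∃ I : ℝ, ∀ t₁ : ℝ, 0 ≤ t₁ → ∀ t ∈ Set.Icc (0:ℝ) t₁,
      (∫ s in (0:ℝ)..t,
          (1 + t) ^ (1 + δ) / (1 + |t - s|) ^ (1 + δ) *
            ((1 + s) ^ (-1 - δ) * (∫ τ in s..t₁, (1 + τ) ^ (-2 - 2*δ))
              + (1 + s) ^ (-2 - 2*δ)))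
        ≤ I := by
  refine ⟨2 / δ, fun t₁ _ t ⟨ht0, htt₁⟩ => ?_⟩
  calc _ ≤ ∫ s in (0:ℝ)..t, 2 * (1 + s) ^ (-1 - δ) :=
        integral_mono_of_nonneg ht0 ((intervalIntegrable_one_add_rpow (by norm_num) ht0).const_mul 2)
          (fun s hs => mul_nonneg (by positivity) (bracket_nonneg hs.1 (hs.2.trans htt₁)))
          fun s hs => weight_mul_bracket_le hδ.le hs.1 hs.2 htt₁
    _ = 2 * ∫ s in (0:ℝ)..t, (1 + s) ^ (-1 - δ) := integral_const_mul _ _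
    _ ≤ 2 * ((1 + 0) ^ (-1 - δ + 1) / (-(-1 - δ) - 1)) := by
        gcongr
        exact integral_one_add_rpow_le (by linarith) (by norm_num) ht0
    _ = 2 / δ := by norm_num; ring

theorem stmt_2 (δ : ℝ) (hδ : 0 < δ) (hδ' : δ < 1/2) :
    ∃ I : ℝ, ∀ t₁ : ℝ, 0 ≤ t₁ → ∀ t ∈ Set.Icc (0:ℝ) t₁,
      (∫ s in (0:ℝ)..t,
          (1 + t) ^ (1 + δ) / (1 + |t - s|) ^ (1 + δ) *
            ((1 + s) ^ (-1 - δ) * (∫ τ in s..t₁, (1 + τ) ^ (-2 - 2*δ))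
              + (1 + s) ^ (-2 - 2*δ)))
        ≤ I :=
  stmt_2_general δ hδ
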